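/- Let S be a partially ordered set with a simply connected extension (∼_u, ∼_l), and let a ≠ b in S. Then the relation O_{a,b} is an equivalence relation on B_{a,b}. -/

import Mathlib

open Pointwise

namespace PaperSC

variable {S : Type*}

/-- Exactly one of four propositions holds. -/
def ExactlyOne4 (p q r s : Prop) : Prop :=
  (p ∨ q ∨ r ∨ s) ∧ (p → ¬q ∧ ¬r ∧ ¬s) ∧ (q → ¬r ∧ ¬s) ∧ (r → ¬s)

/-- `x` and `y` are incomparable with respect to the strict order `lt`. -/
def Incomp (lt : S → S → Prop) (x y : S) : Prop :=
  x ≠ y ∧ ¬ lt x y ∧ ¬ lt y x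

/-- The reflexive closure of `lt`. -/
def Le' (lt : S → S → Prop) (x y : S) : Prop := x = y ∨ lt x y

/-- `x ∼ᵤ y` : `x` and `y` are incomparable and have a common upper bound. -/
def SimU (lt : S → S → Prop) (x y : S) : Prop :=
  Incomp lt x y ∧ ∃ z, Le' lt x z ∧ Le' lt y z

/-- `x ∼ₗ y` : `x` and `y` are incomparable and have a common lower bound. -/
def SimL (lt : S → S → Prop) (x y : S) : Prop :=
  Incomp lt x y ∧ ∃ z, Le' lt z x ∧ Le' lt z y

/-- Every incomparable pair has a common upper bound or a common lower bound. -/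
def StronglyConnectedRel (lt : S → S → Prop) : Prop :=
  ∀ x y, Incomp lt x y → SimU lt x y ∨ SimL lt x y

/-- Acyclicity: `x ∼ᵤ y` and `x ∼ₗ z` imply `y < z`. -/
def AcyclicRel (lt : S → S → Prop) : Prop :=
  ∀ x y z, SimU lt x y → SimL lt x z → lt y z

/-- `(u, l)` is a simply connected extension of the strict partial order `lt`. -/
structure IsSCExt (lt u l : S → S → Prop) : Prop where
  u_symm : ∀ x y, u x y → u y x
  l_symm : ∀ x y, l x y → l y x
  exactly_one : ∀ x y, x ≠ y → ExactlyOne4 (lt x y) (lt y x) (u x y) (l x y)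
  u_of_ub : ∀ x y, Incomp lt x y → (∃ z, Le' lt x z ∧ Le' lt y z) → u x y
  l_of_lb : ∀ x y, Incomp lt x y → (∃ z, Le' lt z x ∧ Le' lt z y) → l x y
  acyclic : ∀ x y z, u x y → l x z → lt y z

/-- `b` is between `a` and `c` (with respect to `lt` and the extension `(u, l)`). -/
def Btwn (lt u l : S → S → Prop) (a c b : S) : Prop :=
  (lt a c ∧ ((lt a b ∧ lt b c) ∨ (u a b ∧ l b c))) ∨
  (lt c a ∧ ((lt c b ∧ lt b a) ∨ (u c b ∧ l b a))) ∨
  (l a c ∧ ((l a b ∧ lt b c) ∨ (l c b ∧ lt b a))) ∨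
  (u a c ∧ ((u a b ∧ lt c b) ∨ (u c b ∧ lt a b)))

/-- The between set `B_{a,b}`; it equals `{a}` when `a = b`. -/
def BSet (lt u l : S → S → Prop) (a b : S) : Set S :=
  {a, b} ∪ {x | a ≠ b ∧ Btwn lt u l a b x}

/-- The set `A` is totally ordered by `lt`. -/
def IsChainRel (lt : S → S → Prop) (A : Set S) : Prop :=
  ∀ p ∈ A, ∀ q ∈ A, p = q ∨ lt p q ∨ lt q p

/-- `x O y` iff `B_{x,y}` is totally ordered by `lt`. -/
def ORel (lt u l : S → S → Prop) (x y : S) : Prop :=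
  IsChainRel lt (BSet lt u l x y)

/-- The extension is rectifiable: every between set is a finite union of `O`-classes. -/
def Rectifiable (lt u l : S → S → Prop) : Prop :=
  ∀ a b : S, a ≠ b → ∃ F : Finset S,
    (↑F : Set S) ⊆ BSet lt u l a b ∧
    ∀ x ∈ BSet lt u l a b, ∃ c ∈ F, ORel lt u l x c

/-!
The key fact is that `B_{a,b}` is covered by two chains with no comparabilities between them:
`[a, b]` and `{p | a ∼ᵤ p ∼ₗ b}` when `a < b`; `{a} ∪ {p > a | b ∼ᵤ p}` and
`{b} ∪ {p > b | a ∼ᵤ p}` when `a ∼ᵤ b`; dually when `a ∼ₗ b`. Hence comparability is transitive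
on `B_{a,b}`. Since `x O y` forces `x` and `y` to be comparable, `x O y` and `y O z` make `x` and
`z` comparable, say `x < z`. Then `B_{x,z}` is the chain `[x, z]` together with the `w` with
`x ∼ᵤ w ∼ₗ z`, and there is no such `w`: comparable with `y`, it would share a bound with `x` or
`z`; incomparable with `y`, acyclicity would put it into `B_{x,y}` or `B_{y,z}` next to an
endpoint it is incomparable with.
-/

theorem comparable_trans_of_subset_union_chains {α : Type*} [Preorder α] {s C₁ C₂ : Set α}
    {x y z : α} (hs : s ⊆ C₁ ∪ C₂)
    (h₁ : IsChain (· ≤ ·) C₁) (h₂ : IsChain (· ≤ ·) C₂)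
    (h₁₂ : ∀ p ∈ C₁, ∀ q ∈ C₂, ¬ p ≤ q ∧ ¬ q ≤ p)
    (hx : x ∈ s) (hy : y ∈ s) (hz : z ∈ s) (hxy : x ≤ y ∨ y ≤ x) (hyz : y ≤ z ∨ z ≤ y) :
    x ≤ z ∨ z ≤ x := by
  have same_side : ∀ {p q}, p ∈ s → q ∈ s → (p ≤ q ∨ q ≤ p) → (p ∈ C₁ ↔ q ∈ C₁) := by
    intro p q hp hq hpq
    constructor
    · intro hp₁
      by_contra hq₁
      exact not_or.2 (h₁₂ p hp₁ q ((hs hq).resolve_left hq₁)) hpq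
    · intro hq₁
      by_contra hp₁
      exact not_or.2 (h₁₂ q hq₁ p ((hs hp).resolve_left hp₁)) hpq.symm
  have hxz := (same_side hx hy hxy).trans (same_side hy hz hyz)
  by_cases hx₁ : x ∈ C₁
  · exact h₁.total hx₁ (hxz.1 hx₁)
  · exact h₂.total ((hs hx).resolve_left hx₁) ((hs hz).resolve_left (hxz.not.1 hx₁))

section

variable [PartialOrder S] {u l : S → S → Prop} {a b c w x y z : S}

theorem isChainRel_lt_iff {A : Set S} : IsChainRel (· < ·) A ↔ IsChain (· ≤ ·) A := by
  refine ⟨fun hA p hp q hq hpq => ?_, fun hA p hp q hq => ?_⟩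
  · rcases hA p hp q hq with h | h | h
    exacts [absurd h hpq, Or.inl h.le, Or.inr h.le]
  · rcases eq_or_ne p q with h | h
    · exact Or.inl h
    · exact Or.inr ((hA.total hp hq).imp h.lt_of_le h.symm.lt_of_le)

theorem incomp_iff : Incomp (· < ·) x y ↔ ¬ x ≤ y ∧ ¬ y ≤ x := by
  simp only [Incomp, le_iff_lt_or_eq, not_or]
  exact ⟨fun ⟨hne, h₁, h₂⟩ => ⟨⟨h₁, hne⟩, h₂, Ne.symm hne⟩,
    fun ⟨⟨h₁, hne⟩, h₂, _⟩ => ⟨hne, h₁, h₂⟩⟩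

theorem isChain_of_forall_not_incomp {C : Set S}
    (hC : ∀ p ∈ C, ∀ q ∈ C, ¬ Incomp (· < ·) p q) : IsChain (· ≤ ·) C := by
  intro p hp q hq _
  by_contra hpq
  exact hC p hp q hq (incomp_iff.2 (not_or.1 hpq))

theorem bset_self (a : S) : BSet (· < ·) u l a a = {a} := by
  ext p
  simp [BSet]

theorem mem_bset_left (a b : S) : a ∈ BSet (· < ·) u l a b :=
  Or.inl (Set.mem_insert a _)

theorem mem_bset_right (a b : S) : b ∈ BSet (· < ·) u l a b :=
  Or.inl (Set.mem_insert_of_mem a rfl)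

theorem orel_self (x : S) : ORel (· < ·) u l x x := by
  intro p hp q hq
  rw [bset_self] at hp hq
  exact Or.inl (hp.trans hq.symm)

theorem comparable_of_orel (hxy : ORel (· < ·) u l x y) : x ≤ y ∨ y ≤ x :=
  (isChainRel_lt_iff.1 hxy).total (mem_bset_left x y) (mem_bset_right x y)

namespace IsSCExt

theorem not_lt_of_u (h : IsSCExt (· < ·) u l) (hu : u x y) : ¬ x < y :=
  fun hlt => ((h.exactly_one x y hlt.ne).2.1 hlt).2.1 hu

theorem not_gt_of_u (h : IsSCExt (· < ·) u l) (hu : u x y) : ¬ y < x :=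
  fun hlt => ((h.exactly_one x y hlt.ne').2.2.1 hlt).1 hu

theorem not_lt_of_l (h : IsSCExt (· < ·) u l) (hl : l x y) : ¬ x < y :=
  fun hlt => ((h.exactly_one x y hlt.ne).2.1 hlt).2.2 hl

theorem not_gt_of_l (h : IsSCExt (· < ·) u l) (hl : l x y) : ¬ y < x :=
  fun hlt => ((h.exactly_one x y hlt.ne').2.2.1 hlt).2 hl

theorem not_l_of_u (h : IsSCExt (· < ·) u l) (hne : x ≠ y) (hu : u x y) :
    ¬ l x y :=
  (h.exactly_one x y hne).2.2.2 hu

theorem incomp_of_u (h : IsSCExt (· < ·) u l) (hne : x ≠ y) (hu : u x y) :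
    Incomp (· < ·) x y :=
  ⟨hne, h.not_lt_of_u hu, h.not_gt_of_u hu⟩

theorem incomp_of_l (h : IsSCExt (· < ·) u l) (hne : x ≠ y) (hl : l x y) :
    Incomp (· < ·) x y :=
  ⟨hne, h.not_lt_of_l hl, h.not_gt_of_l hl⟩

theorem u_or_l (h : IsSCExt (· < ·) u l)
    (hi : Incomp (· < ·) x y) : u x y ∨ l x y := by
  rcases (h.exactly_one x y hi.1).1 with h' | h' | h' | h'
  exacts [absurd h' hi.2.1, absurd h' hi.2.2, Or.inl h', Or.inr h']

theorem u_of_le_of_le (h : IsSCExt (· < ·) u l)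
    (hi : Incomp (· < ·) x y) (hx : x ≤ c) (hy : y ≤ c) : u x y :=
  h.u_of_ub x y hi ⟨c, hx.eq_or_lt, hy.eq_or_lt⟩

theorem l_of_le_of_le (h : IsSCExt (· < ·) u l)
    (hi : Incomp (· < ·) x y) (hx : c ≤ x) (hy : c ≤ y) : l x y :=
  h.l_of_lb x y hi ⟨c, hx.eq_or_lt, hy.eq_or_lt⟩

theorem btwn_symm (h : IsSCExt (· < ·) u l) {p : S} (hp : Btwn (· < ·) u l a b p) :
    Btwn (· < ·) u l b a p := by
  rcases hp with ⟨h₁, h₂⟩ | ⟨h₁, h₂⟩ | ⟨h₁, h₂⟩ | ⟨h₁, h₂⟩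
  · exact Or.inr (Or.inl ⟨h₁, h₂⟩)
  · exact Or.inl ⟨h₁, h₂⟩
  · exact Or.inr (Or.inr (Or.inl ⟨h.l_symm _ _ h₁, h₂.symm⟩))
  · exact Or.inr (Or.inr (Or.inr ⟨h.u_symm _ _ h₁, h₂.symm⟩))

theorem bset_subset_bset_swap (h : IsSCExt (· < ·) u l) (a b : S) :
    BSet (· < ·) u l a b ⊆ BSet (· < ·) u l b a := by
  rintro p ((rfl | rfl) | ⟨hne, hp⟩)
  · exact mem_bset_right b p
  · exact mem_bset_left p a
  · exact Or.inr ⟨hne.symm, h.btwn_symm hp⟩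

theorem bset_comm (h : IsSCExt (· < ·) u l) (a b : S) :
    BSet (· < ·) u l a b = BSet (· < ·) u l b a :=
  (h.bset_subset_bset_swap a b).antisymm (h.bset_subset_bset_swap b a)

theorem orel_comm (h : IsSCExt (· < ·) u l) :
    ORel (· < ·) u l x y ↔ ORel (· < ·) u l y x := by
  rw [ORel, ORel, h.bset_comm]

theorem isChain_Icc (h : IsSCExt (· < ·) u l) (a b : S) :
    IsChain (· ≤ ·) (Set.Icc a b) :=
  isChain_of_forall_not_incomp fun _ hp _ hq hi =>
    h.not_l_of_u hi.1 (h.u_of_le_of_le hi hp.2 hq.2) (h.l_of_le_of_le hi hp.1 hq.1)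

theorem isChain_setOf_u_l (h : IsSCExt (· < ·) u l) (m m' : S) :
    IsChain (· ≤ ·) {p | u m p ∧ l p m'} :=
  isChain_of_forall_not_incomp fun p hp q hq hi => by
    rcases h.u_or_l hi with hpq | hpq
    · exact h.not_lt_of_l hq.2 (h.acyclic p q m' hpq hp.2)
    · exact h.not_lt_of_u hq.1 (h.acyclic p m q (h.u_symm _ _ hp.1) hpq)

theorem isChain_setOf_u_lt (h : IsSCExt (· < ·) u l) (m c : S) :
    IsChain (· ≤ ·) {p | u m p ∧ c < p} :=
  isChain_of_forall_not_incomp fun p hp q hq hi =>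
    h.not_lt_of_u hq.1 (h.acyclic p m q (h.u_symm _ _ hp.1) (h.l_of_le_of_le hi hp.2.le hq.2.le))

theorem isChain_setOf_l_gt (h : IsSCExt (· < ·) u l) (m c : S) :
    IsChain (· ≤ ·) {p | l m p ∧ p < c} :=
  isChain_of_forall_not_incomp fun p hp q hq hi =>
    h.not_gt_of_l hq.1 (h.acyclic p q m (h.u_of_le_of_le hi hp.2.le hq.2.le) (h.l_symm _ _ hp.1))

theorem bset_subset_of_lt (h : IsSCExt (· < ·) u l) (hab : a < b) :
    BSet (· < ·) u l a b ⊆ Set.Icc a b ∪ {p | u a p ∧ l p b} := by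
  rintro p ((rfl | rfl) | ⟨-, hp⟩)
  · exact Or.inl ⟨le_rfl, hab.le⟩
  · exact Or.inl ⟨hab.le, le_rfl⟩
  rcases hp with ⟨-, ⟨hap, hpb⟩ | hp⟩ | ⟨hba, -⟩ | ⟨hl, -⟩ | ⟨hu, -⟩
  · exact Or.inl ⟨hap.le, hpb.le⟩
  · exact Or.inr hp
  · exact absurd hba hab.not_gt
  · exact absurd hab (h.not_lt_of_l hl)
  · exact absurd hab (h.not_lt_of_u hu)

theorem bset_subset_of_u (h : IsSCExt (· < ·) u l) (hab : u a b) :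
    BSet (· < ·) u l a b ⊆
      insert a {p | u b p ∧ a < p} ∪ insert b {p | u a p ∧ b < p} := by
  rintro p ((rfl | rfl) | ⟨hne, hp⟩)
  · exact Or.inl (Set.mem_insert p _)
  · exact Or.inr (Set.mem_insert p _)
  rcases hp with ⟨hlt, -⟩ | ⟨hgt, -⟩ | ⟨hl, -⟩ | ⟨-, ⟨hap, hbp⟩ | ⟨hbp, hap⟩⟩
  · exact absurd hlt (h.not_lt_of_u hab)
  · exact absurd hgt (h.not_gt_of_u hab)
  · exact absurd hl (h.not_l_of_u hne hab)
  · exact Or.inr (Set.mem_insert_of_mem b ⟨hap, hbp⟩)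
  · exact Or.inl (Set.mem_insert_of_mem a ⟨hbp, hap⟩)

theorem bset_subset_of_l (h : IsSCExt (· < ·) u l) (hab : l a b) :
    BSet (· < ·) u l a b ⊆
      insert a {p | l b p ∧ p < a} ∪ insert b {p | l a p ∧ p < b} := by
  rintro p ((rfl | rfl) | ⟨hne, hp⟩)
  · exact Or.inl (Set.mem_insert p _)
  · exact Or.inr (Set.mem_insert p _)
  rcases hp with ⟨hlt, -⟩ | ⟨hgt, -⟩ | ⟨-, ⟨hap, hpb⟩ | ⟨hbp, hpa⟩⟩ | ⟨hu, -⟩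
  · exact absurd hlt (h.not_lt_of_l hab)
  · exact absurd hgt (h.not_gt_of_l hab)
  · exact Or.inr (Set.mem_insert_of_mem b ⟨hap, hpb⟩)
  · exact Or.inl (Set.mem_insert_of_mem a ⟨hbp, hpa⟩)
  · exact absurd hab (h.not_l_of_u hne hu)

-- Nothing forbids `u q q` or `l q q`, hence the separate cases `q = a` and `q = b`.
theorem incomparable_Icc_setOf_u_l (h : IsSCExt (· < ·) u l) (hab : a < b) :
    ∀ p ∈ Set.Icc a b, ∀ q ∈ {q | u a q ∧ l q b}, ¬ p ≤ q ∧ ¬ q ≤ p := by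
  rintro p ⟨hap, hpb⟩ q ⟨haq, hqb⟩
  constructor
  · intro hpq
    obtain rfl | hlt := (hap.trans hpq).eq_or_lt
    · exact h.not_lt_of_l hqb hab
    · exact h.not_lt_of_u haq hlt
  · intro hqp
    obtain rfl | hlt := (hqp.trans hpb).eq_or_lt
    · exact h.not_lt_of_u haq hab
    · exact h.not_lt_of_l hqb hlt

theorem le_and_not_le_of_mem_insert_u (h : IsSCExt (· < ·) u l) (hne : a ≠ b)
    (hab : u a b) {p : S} (hp : p ∈ insert a {p | u b p ∧ a < p}) : a ≤ p ∧ ¬ b ≤ p := by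
  rcases hp with rfl | ⟨hbp, hap⟩
  · exact ⟨le_rfl, fun hba => h.not_gt_of_u hab (hba.lt_of_ne hne.symm)⟩
  · refine ⟨hap.le, fun hbp' => ?_⟩
    obtain rfl | hlt := hbp'.eq_or_lt
    · exact h.not_lt_of_u hab hap
    · exact h.not_lt_of_u hbp hlt

theorem le_and_not_le_of_mem_insert_l (h : IsSCExt (· < ·) u l) (hne : a ≠ b)
    (hab : l a b) {p : S} (hp : p ∈ insert a {p | l b p ∧ p < a}) : p ≤ a ∧ ¬ p ≤ b := by
  rcases hp with rfl | ⟨hbp, hpa⟩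
  · exact ⟨le_rfl, fun hab' => h.not_lt_of_l hab (hab'.lt_of_ne hne)⟩
  · refine ⟨hpa.le, fun hpb => ?_⟩
    obtain rfl | hlt := hpb.eq_or_lt
    · exact h.not_gt_of_l hab hpa
    · exact h.not_gt_of_l hbp hlt

theorem exists_chain_cover_bset (h : IsSCExt (· < ·) u l) (a b : S) :
    ∃ C₁ C₂ : Set S, BSet (· < ·) u l a b ⊆ C₁ ∪ C₂ ∧
      IsChain (· ≤ ·) C₁ ∧ IsChain (· ≤ ·) C₂ ∧ ∀ p ∈ C₁, ∀ q ∈ C₂, ¬ p ≤ q ∧ ¬ q ≤ p := by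
  obtain rfl | hne := eq_or_ne a b
  · refine ⟨{a}, ∅, ?_, Set.subsingleton_singleton.isChain,
      Set.subsingleton_empty.isChain, ?_⟩
    · rw [bset_self]; exact Set.subset_union_left
    · simp
  rcases (h.exactly_one a b hne).1 with hab | hba | hab | hab
  · exact ⟨_, _, h.bset_subset_of_lt hab, h.isChain_Icc a b, h.isChain_setOf_u_l a b,
      h.incomparable_Icc_setOf_u_l hab⟩
  · rw [h.bset_comm]
    exact ⟨_, _, h.bset_subset_of_lt hba, h.isChain_Icc b a, h.isChain_setOf_u_l b a,
      h.incomparable_Icc_setOf_u_l hba⟩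
  · refine ⟨_, _, h.bset_subset_of_u hab, (h.isChain_setOf_u_lt b a).insert
      fun q hq _ => Or.inl hq.2.le, (h.isChain_setOf_u_lt a b).insert
      fun q hq _ => Or.inl hq.2.le, fun p hp q hq => ?_⟩
    obtain ⟨hap, hbp⟩ := h.le_and_not_le_of_mem_insert_u hne hab hp
    obtain ⟨hbq, haq⟩ := h.le_and_not_le_of_mem_insert_u hne.symm (h.u_symm _ _ hab) hq
    exact ⟨fun hpq => haq (hap.trans hpq), fun hqp => hbp (hbq.trans hqp)⟩
  · refine ⟨_, _, h.bset_subset_of_l hab, (h.isChain_setOf_l_gt b a).insert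
      fun q hq _ => Or.inr hq.2.le, (h.isChain_setOf_l_gt a b).insert
      fun q hq _ => Or.inr hq.2.le, fun p hp q hq => ?_⟩
    obtain ⟨hpa, hpb⟩ := h.le_and_not_le_of_mem_insert_l hne hab hp
    obtain ⟨hqb, hqa⟩ := h.le_and_not_le_of_mem_insert_l hne.symm (h.l_symm _ _ hab) hq
    exact ⟨fun hpq => hpb (hpq.trans hqb), fun hqp => hqa (hqp.trans hpa)⟩

theorem comparable_trans_of_mem_bset (h : IsSCExt (· < ·) u l)
    (hx : x ∈ BSet (· < ·) u l a b) (hy : y ∈ BSet (· < ·) u l a b)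
    (hz : z ∈ BSet (· < ·) u l a b) (hxy : x ≤ y ∨ y ≤ x) (hyz : y ≤ z ∨ z ≤ y) : x ≤ z ∨ z ≤ x :=
  have ⟨_, _, hs, h₁, h₂, h₁₂⟩ := h.exists_chain_cover_bset a b
  comparable_trans_of_subset_union_chains hs h₁ h₂ h₁₂ hx hy hz hxy hyz

theorem false_of_orel_of_u_of_l (h : IsSCExt (· < ·) u l)
    (hxy : ORel (· < ·) u l x y) (hyz : ORel (· < ·) u l y z)
    (hxz : x < z) (hu : u x w) (hl : l w z) : False := by
  have hxw : Incomp (· < ·) x w :=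
    h.incomp_of_u (by rintro rfl; exact h.not_lt_of_l hl hxz) hu
  have hwz : Incomp (· < ·) w z :=
    h.incomp_of_l (by rintro rfl; exact h.not_lt_of_u hu hxz) hl
  by_cases hwy : w ≤ y ∨ y ≤ w
  · rcases hwy with hwy | hyw
    · rcases comparable_of_orel hyz with hyz | hzy
      · exact (incomp_iff.1 hwz).1 (hwy.trans hyz)
      · exact h.not_l_of_u hwz.1 (h.u_of_le_of_le hwz hwy hzy) hl
    · rcases comparable_of_orel hxy with hxy | hyx
      · exact (incomp_iff.1 hxw).1 (hxy.trans hyw)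
      · exact h.not_l_of_u hxw.1 hu (h.l_of_le_of_le hxw hyx hyw)
  rcases h.u_or_l (incomp_iff.2 (not_or.1 hwy)) with huwy | hlwy
  · have hyz' : y < z := h.acyclic w y z huwy hl
    have hw : w ∈ BSet (· < ·) u l y z :=
      Or.inr ⟨hyz'.ne, Or.inl ⟨hyz', Or.inr ⟨h.u_symm _ _ huwy, hl⟩⟩⟩
    exact hwy ((isChainRel_lt_iff.1 hyz).total hw (mem_bset_left y z))
  · have hxy' : x < y := h.acyclic w x y (h.u_symm _ _ hu) hlwy
    have hw : w ∈ BSet (· < ·) u l x y :=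
      Or.inr ⟨hxy'.ne, Or.inl ⟨hxy', Or.inr ⟨hu, hlwy⟩⟩⟩
    exact not_or.2 (incomp_iff.1 hxw) ((isChainRel_lt_iff.1 hxy).total (mem_bset_left x y) hw)

theorem orel_of_le (h : IsSCExt (· < ·) u l)
    (hxy : ORel (· < ·) u l x y) (hyz : ORel (· < ·) u l y z)
    (hxz : x ≤ z) : ORel (· < ·) u l x z := by
  obtain rfl | hxz := hxz.eq_or_lt
  · exact orel_self x
  refine isChainRel_lt_iff.2 ((h.isChain_Icc x z).mono fun p hp => ?_)
  rcases h.bset_subset_of_lt hxz hp with hp | ⟨hu, hl⟩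
  · exact hp
  · exact (h.false_of_orel_of_u_of_l hxy hyz hxz hu hl).elim

end IsSCExt
end

theorem stmt8_general {S : Type*} [PartialOrder S] (u l : S → S → Prop)
    (hsce : IsSCExt ((· < ·) : S → S → Prop) u l) (a b : S) :
    (∀ x ∈ BSet ((· < ·) : S → S → Prop) u l a b,
      ORel ((· < ·) : S → S → Prop) u l x x) ∧
    (∀ x ∈ BSet ((· < ·) : S → S → Prop) u l a b,
      ∀ y ∈ BSet ((· < ·) : S → S → Prop) u l a b,
        ORel ((· < ·) : S → S → Prop) u l x y → ORel ((· < ·) : S → S → Prop) u l y x) ∧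
    (∀ x ∈ BSet ((· < ·) : S → S → Prop) u l a b,
      ∀ y ∈ BSet ((· < ·) : S → S → Prop) u l a b,
        ∀ z ∈ BSet ((· < ·) : S → S → Prop) u l a b,
          ORel ((· < ·) : S → S → Prop) u l x y → ORel ((· < ·) : S → S → Prop) u l y z →
            ORel ((· < ·) : S → S → Prop) u l x z) := by
  refine ⟨fun x _ => orel_self x, fun x _ y _ => hsce.orel_comm.1, ?_⟩
  intro x hx y hy z hz hxy hyz
  rcases hsce.comparable_trans_of_mem_bset hx hy hz (comparable_of_orel hxy)
    (comparable_of_orel hyz) with hxz | hzx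
  · exact hsce.orel_of_le hxy hyz hxz
  · exact hsce.orel_comm.1 (hsce.orel_of_le (hsce.orel_comm.1 hyz) (hsce.orel_comm.1 hxy) hzx)

/-- For `a ≠ b`, the relation `O_{a,b}` is an equivalence relation on `B_{a,b}`. -/
theorem stmt8 {S : Type*} [PartialOrder S] (u l : S → S → Prop)
    (hsce : IsSCExt ((· < ·) : S → S → Prop) u l) (a b : S) (hab : a ≠ b) :
    (∀ x ∈ BSet ((· < ·) : S → S → Prop) u l a b,
      ORel ((· < ·) : S → S → Prop) u l x x) ∧
    (∀ x ∈ BSet ((· < ·) : S → S → Prop) u l a b,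
      ∀ y ∈ BSet ((· < ·) : S → S → Prop) u l a b,
        ORel ((· < ·) : S → S → Prop) u l x y → ORel ((· < ·) : S → S → Prop) u l y x) ∧
    (∀ x ∈ BSet ((· < ·) : S → S → Prop) u l a b,
      ∀ y ∈ BSet ((· < ·) : S → S → Prop) u l a b,
        ∀ z ∈ BSet ((· < ·) : S → S → Prop) u l a b,
          ORel ((· < ·) : S → S → Prop) u l x y → ORel ((· < ·) : S → S → Prop) u l y z →
            ORel ((· < ·) : S → S → Prop) u l x z) :=
  stmt8_general u l hsce a b

end PaperSC
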